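/- Let A > 0, B > 0, E₀ < 0 be reals with (A/2) + (B₂/4) − (B₁/4) = E₀ where B₁, B₂ ≥ 0 (so that E(u) = E₀ < 0), and let 0 < γ₂ < γ₁ < 2, β := 1/(2−γ₁) > 0. Define f(θ) = ((θ^{1+2β}−θ)/2)A + ((θ^{2+βγ₂}−θ)/4)B₂ − ((θ^{1+2β}−θ)/4)B₁ for θ ≥ 1. Then f'(θ) = ((1+2β)θ^{2β} − 1)(A/2 − B₁/4) + (((2+βγ₂)θ^{1+βγ₂} − 1)/4) B₂ and f'(θ) < 0 for all θ > 1, hence f(θ) < 0 for all θ > 1 (strict subadditivity scaling estimate). -/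

import Mathlib

/-! Both `f θ` and `f' θ` have the shape `X * (A/2 - B₁/4) + Y/4 * B₂` with `0 < X` and `Y ≤ X`
(for `f'`: `X = (1+2β) θ^{2β} - 1`, `Y = (2+βγ₂) θ^{1+βγ₂} - 1`; for `f`: `X = θ^{1+2β} - θ`,
`Y = θ^{2+βγ₂} - θ`). Since `A/2 - B₁/4 < -B₂/4`, such an expression is below `(Y - X) B₂/4 ≤ 0`.
The comparison `Y ≤ X` comes from `2β = 1 + βγ₁ > 1 + βγ₂` and `θ > 1`. -/

open Real

lemma mul_add_div_four_mul_neg {X Y C B : ℝ} (hX : 0 < X) (hYX : Y ≤ X) (hC : C < -(B / 4))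
    (hB : 0 ≤ B) : X * C + Y / 4 * B < 0 := by
  nlinarith

lemma two_mul_eq_one_add_mul_of_eq_one_div {β γ : ℝ} (hγ : γ ≠ 2) (hβ : β = 1 / (2 - γ)) :
    2 * β = 1 + β * γ := by
  rw [hβ]
  field_simp [sub_ne_zero.mpr hγ.symm]
  ring

lemma mul_rpow_le_mul_rpow {θ a b c d : ℝ} (hθ : 1 ≤ θ) (hab : a ≤ b) (hcd : c ≤ d) (hd : 0 ≤ d) :
    c * θ ^ a ≤ d * θ ^ b :=
  calc c * θ ^ a ≤ d * θ ^ a := by gcongr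
    _ ≤ d * θ ^ b := by gcongr

lemma hasDerivAt_rpow_sub_self {p θ : ℝ} (hθ : θ ≠ 0) :
    HasDerivAt (fun x : ℝ => x ^ p - x) (p * θ ^ (p - 1) - 1) θ :=
  (hasDerivAt_rpow_const (Or.inl hθ)).sub (hasDerivAt_id θ)

lemma hasDerivAt_scaling_energy {A B₁ B₂ p q θ : ℝ} (hθ : θ ≠ 0) :
    HasDerivAt (fun x : ℝ => (x ^ p - x) / 2 * A + (x ^ q - x) / 4 * B₂ - (x ^ p - x) / 4 * B₁)
      ((p * θ ^ (p - 1) - 1) * (A / 2 - B₁ / 4) + (q * θ ^ (q - 1) - 1) / 4 * B₂) θ := by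
  have hp := hasDerivAt_rpow_sub_self (p := p) hθ
  have hq := hasDerivAt_rpow_sub_self (p := q) hθ
  refine ((((hp.div_const 2).mul_const A).add ((hq.div_const 4).mul_const B₂)).sub
    ((hp.div_const 4).mul_const B₁)).congr_deriv ?_
  ring

theorem strict_subadditivity_scaling_general
    (A B₁ B₂ γ₁ γ₂ β : ℝ)
    (hB₂ : 0 ≤ B₂)
    (h21 : γ₂ < γ₁) (h12 : γ₁ < 2)
    (hβ : β = 1 / (2 - γ₁))
    (hE : A / 2 + B₂ / 4 - B₁ / 4 < 0)
    (f : ℝ → ℝ)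
    (hf : ∀ θ, f θ = (θ ^ (1 + 2 * β) - θ) / 2 * A
        + (θ ^ (2 + β * γ₂) - θ) / 4 * B₂
        - (θ ^ (1 + 2 * β) - θ) / 4 * B₁) :
    ∀ θ : ℝ, 1 < θ →
      deriv f θ = ((1 + 2 * β) * θ ^ (2 * β) - 1) * (A / 2 - B₁ / 4)
          + ((2 + β * γ₂) * θ ^ (1 + β * γ₂) - 1) / 4 * B₂ ∧
      deriv f θ < 0 ∧ f θ < 0 := by
  intro θ hθ
  have hβ0 : 0 < β := by rw [hβ]; exact one_div_pos.mpr (by linarith)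
  have hgap : 1 + β * γ₂ < 2 * β := by
    rw [two_mul_eq_one_add_mul_of_eq_one_div h12.ne hβ]; gcongr
  have hC : A / 2 - B₁ / 4 < -(B₂ / 4) := by linarith
  have hderiv : deriv f θ = ((1 + 2 * β) * θ ^ (2 * β) - 1) * (A / 2 - B₁ / 4)
      + ((2 + β * γ₂) * θ ^ (1 + β * γ₂) - 1) / 4 * B₂ := by
    rw [funext hf, (hasDerivAt_scaling_energy (by positivity)).deriv,
      add_sub_cancel_left, show 2 + β * γ₂ - 1 = 1 + β * γ₂ by ring]
  have hθpow : 1 < θ ^ (2 * β) := one_lt_rpow hθ (by positivity)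
  refine ⟨hderiv, hderiv ▸ mul_add_div_four_mul_neg (by nlinarith) ?_ hC hB₂, ?_⟩
  · exact sub_le_sub_right (mul_rpow_le_mul_rpow hθ.le hgap.le (by linarith) (by linarith)) 1
  · rw [hf θ, show (θ ^ (1 + 2 * β) - θ) / 2 * A + (θ ^ (2 + β * γ₂) - θ) / 4 * B₂
        - (θ ^ (1 + 2 * β) - θ) / 4 * B₁ = (θ ^ (1 + 2 * β) - θ) * (A / 2 - B₁ / 4)
        + (θ ^ (2 + β * γ₂) - θ) / 4 * B₂ by ring]
    refine mul_add_div_four_mul_neg ?_ ?_ hC hB₂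
    · have := rpow_lt_rpow_of_exponent_lt hθ (show (1 : ℝ) < 1 + 2 * β by linarith)
      rw [rpow_one] at this
      linarith
    · exact sub_le_sub_right (rpow_le_rpow_of_exponent_le hθ.le (by linarith)) θ

theorem strict_subadditivity_scaling
    (A B₁ B₂ γ₁ γ₂ β : ℝ)
    (hA : 0 < A) (hB₁ : 0 ≤ B₁) (hB₂ : 0 ≤ B₂)
    (hγ2 : 0 < γ₂) (h21 : γ₂ < γ₁) (h12 : γ₁ < 2)
    (hβ : β = 1 / (2 - γ₁))
    (hE : A / 2 + B₂ / 4 - B₁ / 4 < 0)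
    (f : ℝ → ℝ)
    (hf : ∀ θ, f θ = (θ ^ (1 + 2 * β) - θ) / 2 * A
        + (θ ^ (2 + β * γ₂) - θ) / 4 * B₂
        - (θ ^ (1 + 2 * β) - θ) / 4 * B₁) :
    ∀ θ : ℝ, 1 < θ →
      deriv f θ = ((1 + 2 * β) * θ ^ (2 * β) - 1) * (A / 2 - B₁ / 4)
          + ((2 + β * γ₂) * θ ^ (1 + β * γ₂) - 1) / 4 * B₂ ∧
      deriv f θ < 0 ∧ f θ < 0 :=
  strict_subadditivity_scaling_general A B₁ B₂ γ₁ γ₂ β hB₂ h21 h12 hβ hE f hf
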